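/- Let z = x + i·y be a complex number with y ≠ 0 and z ≠ 1, and for n ≥ 1 define δ_n(z) = (y/(1−z)) · ( 2i·n^{-z}/(((n+1)/n)^{2iy} − 1) − i·(n+1)^{-z}·(((n+2)/(n+1))^{2iy} + 1)/(((n+2)/(n+1))^{2iy} − 1) + (n+1)^{-z}·(1−x)/y ). Suppose N ≥ 1 is such that for every n with 1 ≤ n ≤ N, neither y·ln((n+1)/n) nor y·ln((n+2)/(n+1)) is an integer multiple of π. Then ∑_{n=1}^{N} δ_n(z) = ∑_{n=2}^{N} n^{-z} + (1/(1−z)) · ( y·2^{−iy}/sin(y·ln 2) − y·(N+1)^{-z}·cos(y·ln((N+2)/(N+1)))/sin(y·ln((N+2)/(N+1))) + (1−x)·(N+1)^{-z} ). -/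

import Mathlib

/-!
Put `P_n = y·n^{-z}·2i/(((n+1)/n)^{2iy} − 1)`. The partial-fraction identity
`i(E + 1)/(E − 1) = i + 2i/(E − 1)` together with `(1 − x) − iy = 1 − z` gives
`δ_n(z) = (P_n − P_{n+1})/(1 − z) + (n+1)^{-z}`, so the sum telescopes to
`(P_1 − P_{N+1})/(1 − z) + ∑_{n=2}^{N+1} n^{-z}`. Trigonometry only enters through the two
boundary terms: with `θ = y·ln t`, `t^{2iy} = e^{2iθ}` and `2i/(e^{2iθ} − 1) = cot θ − i = e^{−iθ}/sin θ`.
-/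

open Filter

/-- The increment `δ_n(z)` of the radial-convergence construction, in closed complex form:
`δ_n(z) = (y/(1−z))·(2i·n^{-z}/(((n+1)/n)^{2iy} − 1)
  − i·(n+1)^{-z}·(((n+2)/(n+1))^{2iy} + 1)/(((n+2)/(n+1))^{2iy} − 1)
  + (n+1)^{-z}·(1−x)/y)` where `x = Re z`, `y = Im z`. -/
noncomputable def deltaC (z : ℂ) (n : ℕ) : ℂ :=
  ((z.im : ℂ) / (1 - z)) *
    (2 * Complex.I * (n : ℂ) ^ (-z) /
        (((((n : ℝ) + 1) / (n : ℝ) : ℝ) : ℂ) ^ (2 * Complex.I * (z.im : ℂ)) - 1) -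
      Complex.I * ((n : ℂ) + 1) ^ (-z) *
        (((((( n : ℝ) + 2) / ((n : ℝ) + 1) : ℝ) : ℂ) ^ (2 * Complex.I * (z.im : ℂ)) + 1) /
          (((((n : ℝ) + 2) / ((n : ℝ) + 1) : ℝ) : ℂ) ^ (2 * Complex.I * (z.im : ℂ)) - 1)) +
      ((n : ℂ) + 1) ^ (-z) * ((1 - z.re : ℝ) : ℂ) / (z.im : ℂ))

lemma Finset.sum_Icc_add_one {M : Type*} [AddCommMonoid M] (f : ℕ → M) (m n : ℕ) :
    ∑ i ∈ Finset.Icc m n, f (i + 1) = ∑ i ∈ Finset.Icc (m + 1) (n + 1), f i := by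
  rw [← Finset.map_add_right_Icc, Finset.sum_map]
  rfl

lemma Finset.sum_Icc_sub_succ {M : Type*} [AddCommGroup M] (f : ℕ → M) {m n : ℕ} (h : m ≤ n) :
    ∑ i ∈ Finset.Icc m n, (f i - f (i + 1)) = f m - f (n + 1) := by
  rw [← neg_sub, ← Finset.sum_Icc_sub h, ← Finset.sum_neg_distrib]
  simp only [neg_sub]

open Complex

lemma one_sub_eq_ofReal_sub_I_mul_im (z : ℂ) : 1 - z = ((1 - z.re : ℝ) : ℂ) - I * z.im := by
  apply Complex.ext <;> simp

lemma exp_two_mul_mul_I_sub_one (θ : ℂ) : exp (2 * θ * I) - 1 = 2 * I * sin θ * exp (θ * I) := by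
  have hinv : exp (-θ * I) * exp (θ * I) = 1 := by rw [← exp_add]; ring_nf; exact exp_zero
  rw [sin, show 2 * θ * I = θ * I + θ * I by ring, exp_add]
  linear_combination (exp (θ * I) ^ 2 - exp (-θ * I) * exp (θ * I)) * I_sq + hinv

lemma two_mul_I_div_exp_sub_one {θ : ℂ} (hθ : sin θ ≠ 0) :
    2 * I / (exp (2 * θ * I) - 1) = cos θ / sin θ - I := by
  rw [exp_two_mul_mul_I_sub_one]
  have hexp := exp_ne_zero (θ * I)
  field_simp
  rw [mul_comm I θ, exp_mul_I]
  linear_combination -sin_sq_add_cos_sq θ + sin θ ^ 2 * I_sq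

lemma ofReal_cpow_eq_exp {t : ℝ} (ht : 0 < t) (w : ℂ) : (t : ℂ) ^ w = exp (Real.log t * w) := by
  rw [cpow_def_of_ne_zero (by exact_mod_cast ht.ne'), ofReal_log ht.le]

lemma ofReal_cpow_two_mul_I_mul {t : ℝ} (ht : 0 < t) (y : ℝ) :
    (t : ℂ) ^ (2 * I * y) = exp (2 * ((y * Real.log t : ℝ) : ℂ) * I) := by
  rw [ofReal_cpow_eq_exp ht]
  push_cast
  ring_nf

lemma ofReal_cpow_two_mul_I_mul_ne_one {t y : ℝ} (ht : 0 < t) (h : Real.sin (y * Real.log t) ≠ 0) :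
    (t : ℂ) ^ (2 * I * y) ≠ 1 := by
  rw [ofReal_cpow_two_mul_I_mul ht, ← sub_ne_zero, exp_two_mul_mul_I_sub_one, ← ofReal_sin]
  exact mul_ne_zero (mul_ne_zero (by simp) (ofReal_ne_zero.mpr h)) (exp_ne_zero _)

lemma two_mul_I_div_ofReal_cpow_sub_one {t y : ℝ} (ht : 0 < t) (h : Real.sin (y * Real.log t) ≠ 0) :
    2 * I / ((t : ℂ) ^ (2 * I * y) - 1) =
      (Real.cos (y * Real.log t) : ℂ) / (Real.sin (y * Real.log t) : ℂ) - I := by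
  rw [ofReal_cpow_two_mul_I_mul ht, two_mul_I_div_exp_sub_one (by exact_mod_cast h),
    ofReal_cos, ofReal_sin]

lemma two_cpow_neg_I_mul (y : ℝ) :
    (2 : ℂ) ^ (-(I * y)) = Real.cos (y * Real.log 2) - Real.sin (y * Real.log 2) * I := by
  rw [show (2 : ℂ) = ((2 : ℝ) : ℂ) by norm_num, ofReal_cpow_eq_exp two_pos,
    show (Real.log 2 : ℂ) * -(I * y) = ((-(y * Real.log 2) : ℝ) : ℂ) * I by push_cast; ring,
    exp_mul_I, ← ofReal_cos, ← ofReal_sin, Real.cos_neg, Real.sin_neg]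
  push_cast
  ring

noncomputable def deltaCPotential (z : ℂ) (n : ℕ) : ℂ :=
  z.im * (n : ℂ) ^ (-z) *
    (2 * I / (((((n : ℝ) + 1) / (n : ℝ) : ℝ) : ℂ) ^ (2 * I * (z.im : ℂ)) - 1))

lemma deltaCPotential_succ (z : ℂ) (n : ℕ) :
    deltaCPotential z (n + 1) = z.im * ((n : ℂ) + 1) ^ (-z) *
      (2 * I / (((((n : ℝ) + 2) / ((n : ℝ) + 1) : ℝ) : ℂ) ^ (2 * I * (z.im : ℂ)) - 1)) := by
  rw [deltaCPotential, show (((n + 1 : ℕ) : ℝ) + 1) / ((n + 1 : ℕ) : ℝ) = ((n : ℝ) + 2) / ((n : ℝ) + 1) by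
    push_cast; ring]
  push_cast
  rfl

lemma deltaCPotential_one {z : ℂ} (h : Real.sin (z.im * Real.log 2) ≠ 0) :
    deltaCPotential z 1 = z.im * (2 : ℂ) ^ (-(I * z.im)) / Real.sin (z.im * Real.log 2) := by
  rw [deltaCPotential, two_cpow_neg_I_mul, show (((1 : ℕ) : ℝ) + 1) / ((1 : ℕ) : ℝ) = 2 by norm_num,
    two_mul_I_div_ofReal_cpow_sub_one two_pos h]
  have : (Real.sin (z.im * Real.log 2) : ℂ) ≠ 0 := by exact_mod_cast h
  field_simp
  simp

lemma deltaCPotential_succ_eq_cot {z : ℂ} {n : ℕ}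
    (h : Real.sin (z.im * Real.log (((n : ℝ) + 2) / ((n : ℝ) + 1))) ≠ 0) :
    deltaCPotential z (n + 1) = z.im * ((n : ℂ) + 1) ^ (-z) *
      (Real.cos (z.im * Real.log (((n : ℝ) + 2) / ((n : ℝ) + 1))) /
        Real.sin (z.im * Real.log (((n : ℝ) + 2) / ((n : ℝ) + 1))) - I) := by
  rw [deltaCPotential_succ, two_mul_I_div_ofReal_cpow_sub_one (by positivity) h]

theorem deltaC_eq_sub_div_add {z : ℂ} (hy : z.im ≠ 0) (hz : z ≠ 1) {n : ℕ}
    (hE : (((((n : ℝ) + 2) / ((n : ℝ) + 1) : ℝ) : ℂ) ^ (2 * I * (z.im : ℂ))) ≠ 1) :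
    deltaC z n =
      (deltaCPotential z n - deltaCPotential z (n + 1)) / (1 - z) + ((n : ℂ) + 1) ^ (-z) := by
  have hz' : 1 - z ≠ 0 := sub_ne_zero.mpr (Ne.symm hz)
  have hy' : (z.im : ℂ) ≠ 0 := by exact_mod_cast hy
  rw [deltaC, deltaCPotential_succ, deltaCPotential]
  generalize (((((n : ℝ) + 2) / ((n : ℝ) + 1) : ℝ) : ℂ) ^ (2 * I * (z.im : ℂ))) = E at hE ⊢
  have hE' := sub_ne_zero.mpr hE
  field_simp
  linear_combination (-(E - 1) * ((n : ℂ) + 1) ^ (-z)) * one_sub_eq_ofReal_sub_I_mul_im z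

theorem sum_deltaC_eq {z : ℂ} (hy : z.im ≠ 0) (hz : z ≠ 1) {N : ℕ} (hN : 1 ≤ N)
    (h : ∀ n ∈ Finset.Icc 1 N, Real.sin (z.im * Real.log (((n : ℝ) + 2) / ((n : ℝ) + 1))) ≠ 0) :
    ∑ n ∈ Finset.Icc 1 N, deltaC z n =
      (deltaCPotential z 1 - deltaCPotential z (N + 1)) / (1 - z) +
        ∑ n ∈ Finset.Icc 2 N, (n : ℂ) ^ (-z) + ((N : ℂ) + 1) ^ (-z) := by
  have hδ : ∀ n ∈ Finset.Icc 1 N, deltaC z n =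
      (deltaCPotential z n - deltaCPotential z (n + 1)) / (1 - z) + ((n + 1 : ℕ) : ℂ) ^ (-z) :=
    fun n hn ↦ by
      rw [deltaC_eq_sub_div_add hy hz (ofReal_cpow_two_mul_I_mul_ne_one (by positivity) (h n hn))]
      push_cast
      rfl
  rw [Finset.sum_congr rfl hδ, Finset.sum_add_distrib, ← Finset.sum_div,
    Finset.sum_Icc_sub_succ _ hN, Finset.sum_Icc_add_one (fun n : ℕ ↦ (n : ℂ) ^ (-z)),
    Finset.sum_Icc_succ_top (by omega)]
  push_cast
  ring

/-- The telescoping identity: for `z = x + i·y` with `y ≠ 0`, `z ≠ 1`, and `N ≥ 1` such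
that for `1 ≤ n ≤ N` neither `y·ln((n+1)/n)` nor `y·ln((n+2)/(n+1))` is an integer
multiple of `π`,
`∑_{n=1}^{N} δ_n(z) = ∑_{n=2}^{N} n^{-z} + (1/(1−z))·(y·2^{−iy}/sin(y·ln 2)
  − y·(N+1)^{-z}·cos(y·ln((N+2)/(N+1)))/sin(y·ln((N+2)/(N+1))) + (1−x)·(N+1)^{-z})`. -/
theorem deltaC_telescoping (z : ℂ) (hy : z.im ≠ 0) (hz : z ≠ 1) (N : ℕ) (hN : 1 ≤ N)
    (h : ∀ n : ℕ, 1 ≤ n → n ≤ N →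
      (∀ k : ℤ, z.im * Real.log (((n : ℝ) + 1) / (n : ℝ)) ≠ k * Real.pi) ∧
      (∀ k : ℤ, z.im * Real.log (((n : ℝ) + 2) / ((n : ℝ) + 1)) ≠ k * Real.pi)) :
    ∑ n ∈ Finset.Icc 1 N, deltaC z n =
      ∑ n ∈ Finset.Icc 2 N, (n : ℂ) ^ (-z) +
        (1 / (1 - z)) *
          ((z.im : ℂ) * (2 : ℂ) ^ (-(Complex.I * (z.im : ℂ))) /
              ((Real.sin (z.im * Real.log 2) : ℝ) : ℂ) -
            (z.im : ℂ) * ((N : ℂ) + 1) ^ (-z) *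
              (((Real.cos (z.im * Real.log (((N : ℝ) + 2) / ((N : ℝ) + 1))) : ℝ) : ℂ) /
                ((Real.sin (z.im * Real.log (((N : ℝ) + 2) / ((N : ℝ) + 1))) : ℝ) : ℂ)) +
            ((1 - z.re : ℝ) : ℂ) * ((N : ℂ) + 1) ^ (-z)) := by
  have hsin : ∀ n ∈ Finset.Icc 1 N,
      Real.sin (z.im * Real.log (((n : ℝ) + 1) / n)) ≠ 0 ∧
        Real.sin (z.im * Real.log (((n : ℝ) + 2) / ((n : ℝ) + 1))) ≠ 0 := fun n hn ↦
    (h n (Finset.mem_Icc.mp hn).1 (Finset.mem_Icc.mp hn).2).imp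
      (fun h₁ ↦ Real.sin_ne_zero_iff.mpr fun k hk ↦ h₁ k hk.symm)
      (fun h₂ ↦ Real.sin_ne_zero_iff.mpr fun k hk ↦ h₂ k hk.symm)
  have hsin₁ := (hsin 1 (Finset.mem_Icc.mpr ⟨le_rfl, hN⟩)).1
  norm_num at hsin₁
  rw [sum_deltaC_eq hy hz hN fun n hn ↦ (hsin n hn).2, deltaCPotential_one hsin₁,
    deltaCPotential_succ_eq_cot (hsin N (Finset.mem_Icc.mpr ⟨hN, le_rfl⟩)).2]
  have hz' : 1 - z ≠ 0 := sub_ne_zero.mpr (Ne.symm hz)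
  field_simp
  linear_combination ((N : ℂ) + 1) ^ (-z) * one_sub_eq_ofReal_sub_I_mul_im z
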